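/- arXiv:0807.3621 — 3 statements merged into one kernel-verified Lean document; each statement's English description precedes it below -/
import Mathlib

section
/- For a properly ordered Bratteli diagram B, the Vershik map V_B is continuous on X_B, hence a homeomorphism of the compact space X_B. -/
/-- There is a path of `st` edges from `v ∈ V k` to `w ∈ V (k + st)`. -/
def ReachesIn (V : ℕ → Type) (E : ℕ → Type)
    (src : ∀ n, E n → V n) (tgt : ∀ n, E n → V (n + 1)) :
    (st : ℕ) → (k : ℕ) → V k → V (k + st) → Prop
  | 0, _, v, w => v = w
  | st + 1, k, v, w =>
      ∃ e : E (k + st), tgt (k + st) e = w ∧ ReachesIn V E src tgt st k v (src (k + st) e)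

/-- `e` is the greatest element of its fiber `tgt⁻¹(tgt e)`. -/
def EdgeMaximal (V : ℕ → Type) (E : ℕ → Type) (tgt : ∀ n, E n → V (n + 1))
    (le : ∀ n, E n → E n → Prop) (n : ℕ) (e : E n) : Prop :=
  ∀ f : E n, tgt n f = tgt n e → le n f e

/-- `e` is the least element of its fiber `tgt⁻¹(tgt e)`. -/
def EdgeMinimal (V : ℕ → Type) (E : ℕ → Type) (tgt : ∀ n, E n → V (n + 1))
    (le : ∀ n, E n → E n → Prop) (n : ℕ) (e : E n) : Prop :=
  ∀ f : E n, tgt n f = tgt n e → le n e f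

/-- `f` is the successor of `e` in the linear order on the fiber `tgt⁻¹(tgt e)`. -/
def EdgeSucc (V : ℕ → Type) (E : ℕ → Type) (tgt : ∀ n, E n → V (n + 1))
    (le : ∀ n, E n → E n → Prop) (n : ℕ) (e f : E n) : Prop :=
  tgt n f = tgt n e ∧ le n e f ∧ e ≠ f ∧
    ∀ g : E n, tgt n g = tgt n e → le n e g → g ≠ e → le n f g

set_option linter.unusedSectionVars false

section VershikAux

/-- A properly ordered Bratteli diagram, bundled. -/
structure POB (V : ℕ → Type) (E : ℕ → Type) where
  src : ∀ n, E n → V n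
  tgt : ∀ n, E n → V (n + 1)
  le : ∀ n, E n → E n → Prop
  hrange : ∀ n (v : V (n + 1)), ∃ e : E n, tgt n e = v
  hsource : ∀ n (v : V n), ∃ e : E n, src n e = v
  hrefl : ∀ n (e : E n), le n e e
  hantisymm : ∀ n (e f : E n), le n e f → le n f e → e = f
  htrans : ∀ n (e f g : E n), le n e f → le n f g → le n e g
  htotal : ∀ n (e f : E n), tgt n e = tgt n f → le n e f ∨ le n f e
  xmax : {x : ∀ n, E n // ∀ n, tgt n (x n) = src (n + 1) (x (n + 1))}
  xmin : {x : ∀ n, E n // ∀ n, tgt n (x n) = src (n + 1) (x (n + 1))}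
  hxmax : ∀ n, EdgeMaximal V E tgt le n (xmax.val n)
  hxmax_unique : ∀ x : {x : ∀ n, E n // ∀ n, tgt n (x n) = src (n + 1) (x (n + 1))},
    (∀ n, EdgeMaximal V E tgt le n (x.val n)) → x = xmax
  hxmin : ∀ n, EdgeMinimal V E tgt le n (xmin.val n)
  hxmin_unique : ∀ x : {x : ∀ n, E n // ∀ n, tgt n (x n) = src (n + 1) (x (n + 1))},
    (∀ n, EdgeMinimal V E tgt le n (x.val n)) → x = xmin

namespace POB

variable {V : ℕ → Type} {E : ℕ → Type}

/-- The path space. -/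
abbrev X (B : POB V E) :=
  {x : ∀ n, E n // ∀ n, B.tgt n (x n) = B.src (n + 1) (x (n + 1))}

/-- The opposite diagram: reverse the order on each fiber. -/
def op (B : POB V E) : POB V E where
  src := B.src
  tgt := B.tgt
  le := fun n e f => B.le n f e
  hrange := B.hrange
  hsource := B.hsource
  hrefl := B.hrefl
  hantisymm := fun n e f h1 h2 => B.hantisymm n e f h2 h1
  htrans := fun n e f g h1 h2 => B.htrans n g f e h2 h1
  htotal := fun n e f h => (B.htotal n e f h).symm
  xmax := B.xmin
  xmin := B.xmax
  hxmax := B.hxmin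
  hxmax_unique := B.hxmin_unique
  hxmin := B.hxmax
  hxmin_unique := B.hxmax_unique

variable [∀ n, Fintype (E n)]

lemma exists_min (B : POB V E) (n : ℕ) (v : V (n + 1)) (P : E n → Prop)
    (hsub : ∀ e, P e → B.tgt n e = v) (hne : ∃ e, P e) :
    ∃ e, P e ∧ ∀ f, P f → B.le n e f := by
  classical
  obtain ⟨e0, he0⟩ := hne
  have key : ∀ s : Finset (E n), (∀ e ∈ s, P e) → s.Nonempty →
      ∃ m ∈ s, ∀ f ∈ s, B.le n m f := by
    intro s
    induction s using Finset.induction_on with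
    | empty => intro _ h; exact absurd h (by simp)
    | @insert a s ha ih =>
      intro hP _
      by_cases hs : s.Nonempty
      · obtain ⟨m, hm, hmin⟩ := ih (fun e he => hP e (Finset.mem_insert_of_mem he)) hs
        have hPa : P a := hP a (Finset.mem_insert_self a s)
        have hPm : P m := hP m (Finset.mem_insert_of_mem hm)
        rcases B.htotal n a m (by rw [hsub a hPa, hsub m hPm]) with h | h
        · refine ⟨a, Finset.mem_insert_self a s, ?_⟩
          intro f hf
          rcases Finset.mem_insert.mp hf with rfl | hf
          · exact B.hrefl n f
          · exact B.htrans n a m f h (hmin f hf)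
        · refine ⟨m, Finset.mem_insert_of_mem hm, ?_⟩
          intro f hf
          rcases Finset.mem_insert.mp hf with rfl | hf
          · exact h
          · exact hmin f hf
      · rw [Finset.not_nonempty_iff_eq_empty.mp hs]
        refine ⟨a, by simp, ?_⟩
        intro f hf
        have : f = a := by simpa using hf
        subst this
        exact B.hrefl n f
  obtain ⟨m, hm, hmin⟩ := key (Finset.univ.filter P) (by simp) ⟨e0, by simp [he0]⟩
  have hPm : P m := by simpa using hm
  exact ⟨m, hPm, fun f hf => hmin f (by simp [hf])⟩

noncomputable def minEdge (B : POB V E) (n : ℕ) (v : V (n + 1)) : E n :=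
  Classical.choose (B.exists_min n v (fun e => B.tgt n e = v) (fun _ h => h) (B.hrange n v))

lemma minEdge_tgt (B : POB V E) (n : ℕ) (v : V (n + 1)) : B.tgt n (B.minEdge n v) = v :=
  (Classical.choose_spec
    (B.exists_min n v (fun e => B.tgt n e = v) (fun _ h => h) (B.hrange n v))).1

lemma minEdge_min (B : POB V E) (n : ℕ) (v : V (n + 1)) :
    ∀ f, B.tgt n f = v → B.le n (B.minEdge n v) f :=
  (Classical.choose_spec
    (B.exists_min n v (fun e => B.tgt n e = v) (fun _ h => h) (B.hrange n v))).2

lemma minEdge_minimal (B : POB V E) (n : ℕ) (v : V (n + 1)) :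
    EdgeMinimal V E B.tgt B.le n (B.minEdge n v) := fun f hf =>
  B.minEdge_min n v f (hf.trans (B.minEdge_tgt n v))

lemma minEdge_eq (B : POB V E) {n : ℕ} {v : V (n + 1)} {e : E n}
    (h1 : EdgeMinimal V E B.tgt B.le n e) (h2 : B.tgt n e = v) : B.minEdge n v = e :=
  B.hantisymm n _ _ (B.minEdge_min n v e h2) (h1 _ ((B.minEdge_tgt n v).trans h2.symm))

lemma not_max_exists (B : POB V E) {n : ℕ} {e : E n}
    (h : ¬ EdgeMaximal V E B.tgt B.le n e) :
    ∃ f, B.tgt n f = B.tgt n e ∧ B.le n e f ∧ e ≠ f := by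
  rw [EdgeMaximal] at h
  push_neg at h
  obtain ⟨f, hf, hle⟩ := h
  have h1 : B.le n e f := (B.htotal n e f hf.symm).resolve_right hle
  exact ⟨f, hf, h1, fun he => hle (by rw [← he]; exact B.hrefl n e)⟩

open Classical in
noncomputable def succEdge (B : POB V E) (n : ℕ) (e : E n) : E n :=
  if h : EdgeMaximal V E B.tgt B.le n e then e
  else Classical.choose (B.exists_min n (B.tgt n e)
    (fun f => B.tgt n f = B.tgt n e ∧ B.le n e f ∧ e ≠ f)
    (fun _ hf => hf.1) (B.not_max_exists h))

lemma succEdge_spec (B : POB V E) {n : ℕ} {e : E n}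
    (h : ¬ EdgeMaximal V E B.tgt B.le n e) :
    EdgeSucc V E B.tgt B.le n e (B.succEdge n e) := by
  unfold succEdge
  rw [dif_neg h]
  obtain ⟨⟨h1, h2, h3⟩, h4⟩ := Classical.choose_spec (B.exists_min n (B.tgt n e)
    (fun f => B.tgt n f = B.tgt n e ∧ B.le n e f ∧ e ≠ f)
    (fun _ hf => hf.1) (B.not_max_exists h))
  exact ⟨h1, h2, h3, fun g hg hle hne => h4 g ⟨hg, hle, Ne.symm hne⟩⟩

lemma edgeSucc_unique_right (B : POB V E) {n : ℕ} {e f f' : E n}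
    (h : EdgeSucc V E B.tgt B.le n e f) (h' : EdgeSucc V E B.tgt B.le n e f') : f = f' :=
  B.hantisymm n f f' (h.2.2.2 f' h'.1 h'.2.1 (Ne.symm h'.2.2.1))
    (h'.2.2.2 f h.1 h.2.1 (Ne.symm h.2.2.1))

lemma edgeSucc_below (B : POB V E) {n : ℕ} {e f : E n}
    (h : EdgeSucc V E B.tgt B.le n e f) :
    ∀ g, B.tgt n g = B.tgt n f → B.le n g f → g ≠ f → B.le n g e := by
  intro g hg hgf hne
  rcases B.htotal n g e (hg.trans h.1) with hc | hc
  · exact hc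
  · by_cases hge : g = e
    · subst hge; exact B.hrefl n g
    · have h2 := h.2.2.2 g (hg.trans h.1) hc hge
      exact absurd (B.hantisymm n g f hgf h2) hne

lemma edgeSucc_unique_left (B : POB V E) {n : ℕ} {e e' f : E n}
    (h : EdgeSucc V E B.tgt B.le n e f) (h' : EdgeSucc V E B.tgt B.le n e' f) : e = e' :=
  B.hantisymm n e e'
    (B.edgeSucc_below h' e h.1.symm h.2.1 h.2.2.1)
    (B.edgeSucc_below h e' h'.1.symm h'.2.1 h'.2.2.1)

lemma edgeSucc_op (B : POB V E) {n : ℕ} {e f : E n}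
    (h : EdgeSucc V E B.op.tgt B.op.le n f e) : EdgeSucc V E B.tgt B.le n e f := by
  obtain ⟨h1, h2, h3, h4⟩ := h
  refine ⟨h1.symm, h2, Ne.symm h3, ?_⟩
  intro g hg hleg hne
  rcases B.htotal n f g ((hg.trans h1).symm) with hc | hc
  · exact hc
  · by_cases hgf : g = f
    · subst hgf; exact B.hrefl n g
    · have h5 := h4 g (hg.trans h1) hc hgf
      exact absurd (B.hantisymm n e g hleg h5) (Ne.symm hne)

noncomputable def pm (B : POB V E) : (k : ℕ) → V k → (i : ℕ) → E i
  | 0, _ => fun i => B.xmax.val i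
  | k + 1, v => Function.update (B.pm k (B.src k (B.minEdge k v))) k (B.minEdge k v)

lemma pm_self (B : POB V E) (k : ℕ) (v : V (k + 1)) :
    B.pm (k + 1) v k = B.minEdge k v := by
  simp only [pm]
  exact Function.update_self _ _ _

lemma pm_lt (B : POB V E) {k i : ℕ} (v : V (k + 1)) (h : i < k) :
    B.pm (k + 1) v i = B.pm k (B.src k (B.minEdge k v)) i := by
  simp only [pm]
  exact Function.update_of_ne (Nat.ne_of_lt h) _ _

lemma pm_min (B : POB V E) : ∀ (k : ℕ) (v : V k) (i : ℕ), i < k →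
    EdgeMinimal V E B.tgt B.le i (B.pm k v i) := by
  intro k
  induction k with
  | zero => intro v i h; exact absurd h (Nat.not_lt_zero i)
  | succ k ih =>
    intro v i h
    rcases Nat.lt_succ_iff_lt_or_eq.mp h with h' | h'
    · rw [B.pm_lt v h']; exact ih _ i h'
    · subst h'; rw [B.pm_self]; exact B.minEdge_minimal i v

lemma pm_tgt_top (B : POB V E) (k : ℕ) (v : V (k + 1)) :
    B.tgt k (B.pm (k + 1) v k) = v := by
  rw [B.pm_self]; exact B.minEdge_tgt k v

lemma pm_compat (B : POB V E) : ∀ (k : ℕ) (v : V k) (i : ℕ), i + 1 < k →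
    B.tgt i (B.pm k v i) = B.src (i + 1) (B.pm k v (i + 1)) := by
  intro k
  induction k with
  | zero => intro v i h; exact absurd h (by omega)
  | succ k ih =>
    intro v i h
    rcases Nat.lt_succ_iff_lt_or_eq.mp h with h' | h'
    · rw [B.pm_lt v (by omega), B.pm_lt v h']
      exact ih _ i h'
    · subst h'
      rw [B.pm_self (i + 1) v, B.pm_lt v (by omega)]
      exact B.pm_tgt_top i _

lemma pm_unique (B : POB V E) : ∀ (k : ℕ) (v : V (k + 1)) (y : ∀ i, E i),
    (∀ i, i ≤ k → EdgeMinimal V E B.tgt B.le i (y i)) →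
    (∀ i, i + 1 ≤ k → B.tgt i (y i) = B.src (i + 1) (y (i + 1))) →
    B.tgt k (y k) = v →
    ∀ i, i ≤ k → y i = B.pm (k + 1) v i := by
  intro k
  induction k with
  | zero =>
    intro v y hmin _ htop i hi
    have h0 : i = 0 := Nat.le_zero.mp hi
    subst h0
    rw [B.pm_self]
    exact (B.minEdge_eq (hmin 0 le_rfl) htop).symm
  | succ k ih =>
    intro v y hmin hcpt htop i hi
    have hyk : y (k + 1) = B.minEdge (k + 1) v :=
      (B.minEdge_eq (hmin (k + 1) le_rfl) htop).symm
    rcases Nat.lt_or_ge i (k + 1) with hik | hik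
    · rw [B.pm_lt v hik]
      refine ih (B.src (k + 1) (B.minEdge (k + 1) v)) y
        (fun j hj => hmin j (by omega)) (fun j hj => hcpt j (by omega)) ?_ i (by omega)
      rw [← hyk]
      exact hcpt k (by omega)
    · have h0 : i = k + 1 := by omega
      subst h0
      rw [B.pm_self]
      exact hyk

lemma pm_cascade (B : POB V E) : ∀ (k : ℕ) (v : V k) (M : ℕ), M ≤ k →
    ∃ w : V M, ∀ i, i < M → B.pm k v i = B.pm M w i := by
  intro k
  induction k with
  | zero =>
    intro v M h
    have h0 : M = 0 := Nat.le_zero.mp h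
    subst h0
    exact ⟨v, fun i hi => absurd hi (by omega)⟩
  | succ k ih =>
    intro v M h
    rcases Nat.lt_or_ge M (k + 1) with hM | hM
    · obtain ⟨w, hw⟩ := ih (B.src k (B.minEdge k v)) M (by omega)
      exact ⟨w, fun i hi => by rw [B.pm_lt v (by omega)]; exact hw i hi⟩
    · have h0 : M = k + 1 := by omega
      subst h0
      exact ⟨v, fun i hi => rfl⟩

noncomputable def out (B : POB V E) (n : ℕ) (v : V n) : E n :=
  Classical.choose (B.hsource n v)

lemma out_src (B : POB V E) (n : ℕ) (v : V n) : B.src n (B.out n v) = v :=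
  Classical.choose_spec (B.hsource n v)

noncomputable def tail (B : POB V E) (k : ℕ) (v : V k) : (i : ℕ) → E i
  | 0 => if h : k = 0 then B.out 0 (cast (congrArg V h) v) else B.xmax.val 0
  | i + 1 =>
    if h : k = i + 1 then B.out (i + 1) (cast (congrArg V h) v)
    else if k ≤ i then B.out (i + 1) (B.tgt i (B.tail k v i)) else B.xmax.val (i + 1)

lemma tail_src_self (B : POB V E) (k : ℕ) (v : V k) : B.src k (B.tail k v k) = v := by
  cases k with
  | zero =>
    have h : B.tail 0 v 0 = B.out 0 (cast (congrArg V (rfl : (0 : ℕ) = 0)) v) :=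
      dif_pos rfl
    rw [h, cast_eq]
    exact B.out_src 0 v
  | succ i =>
    have h : B.tail (i + 1) v (i + 1)
        = B.out (i + 1) (cast (congrArg V (rfl : i + 1 = i + 1)) v) :=
      dif_pos rfl
    rw [h, cast_eq]
    exact B.out_src (i + 1) v

lemma tail_compat (B : POB V E) (k : ℕ) (v : V k) {i : ℕ} (h : k ≤ i) :
    B.tgt i (B.tail k v i) = B.src (i + 1) (B.tail k v (i + 1)) := by
  have h1 : B.tail k v (i + 1)
      = if k ≤ i then B.out (i + 1) (B.tgt i (B.tail k v i)) else B.xmax.val (i + 1) :=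
    dif_neg (by omega)
  rw [h1, if_pos h, B.out_src]

lemma pm_extend (B : POB V E) (m : ℕ) (v : V (m + 1)) :
    ∃ x : B.X, ∀ i, i ≤ m → x.val i = B.pm (m + 1) v i := by
  refine ⟨⟨fun i => if i ≤ m then B.pm (m + 1) v i else B.tail (m + 1) v i, ?_⟩,
    fun i hi => by simp [hi]⟩
  intro n
  show B.tgt n (if n ≤ m then B.pm (m + 1) v n else B.tail (m + 1) v n)
    = B.src (n + 1) (if n + 1 ≤ m then B.pm (m + 1) v (n + 1) else B.tail (m + 1) v (n + 1))
  rcases lt_trichotomy n m with h | h | h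
  · rw [if_pos (by omega), if_pos (by omega)]
    exact B.pm_compat (m + 1) v n (by omega)
  · subst h
    rw [if_pos le_rfl, if_neg (by omega)]
    rw [B.pm_tgt_top]
    exact (B.tail_src_self (n + 1) v).symm
  · rw [if_neg (by omega), if_neg (by omega)]
    exact B.tail_compat (m + 1) v (by omega)

open Classical in
noncomputable def kOf (B : POB V E) (x : B.X) : ℕ :=
  if hex : ∃ i, ¬ EdgeMaximal V E B.tgt B.le i (x.val i)
  then @Nat.find _ (fun _ => Classical.dec _) hex else 0

lemma kOf_spec (B : POB V E) (x : B.X)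
    (hex : ∃ i, ¬ EdgeMaximal V E B.tgt B.le i (x.val i)) :
    ¬ EdgeMaximal V E B.tgt B.le (B.kOf x) (x.val (B.kOf x)) := by
  unfold kOf
  rw [dif_pos hex]
  exact @Nat.find_spec _ (fun _ => Classical.dec _) hex

lemma kOf_min (B : POB V E) (x : B.X) :
    ∀ i, i < B.kOf x → EdgeMaximal V E B.tgt B.le i (x.val i) := by
  intro i hi
  by_cases hex : ∃ j, ¬ EdgeMaximal V E B.tgt B.le j (x.val j)
  · unfold kOf at hi
    rw [dif_pos hex] at hi
    exact not_not.mp (@Nat.find_min _ (fun _ => Classical.dec _) hex i hi)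
  · unfold kOf at hi
    rw [dif_neg hex] at hi
    omega

lemma kOf_eq (B : POB V E) (x : B.X) {m : ℕ}
    (hm : ¬ EdgeMaximal V E B.tgt B.le m (x.val m))
    (hl : ∀ i, i < m → EdgeMaximal V E B.tgt B.le i (x.val i)) :
    B.kOf x = m := by
  have hex : ∃ i, ¬ EdgeMaximal V E B.tgt B.le i (x.val i) := ⟨m, hm⟩
  have h1 : B.kOf x ≤ m := by
    by_contra h
    exact hm (B.kOf_min x m (by omega))
  have h2 : ¬ B.kOf x < m := fun h => B.kOf_spec x hex (hl _ h)
  omega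

lemma spliceMem (B : POB V E) (k : ℕ) (f : E k) (x : B.X)
    (hf : B.tgt k f = B.tgt k (x.val k)) (n : ℕ) :
    B.tgt n (Function.update
        (fun i => if i < k then B.pm k (B.src k f) i else x.val i) k f n)
      = B.src (n + 1) (Function.update
        (fun i => if i < k then B.pm k (B.src k f) i else x.val i) k f (n + 1)) := by
  rcases lt_trichotomy (n + 1) k with h | h | h
  · simp only [Function.update_of_ne (show n ≠ k by omega),
      Function.update_of_ne (show n + 1 ≠ k by omega)]
    rw [if_pos (show n < k by omega), if_pos h]
    exact B.pm_compat k _ n h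
  · subst h
    simp only [Function.update_self, Function.update_of_ne (show n ≠ n + 1 by omega)]
    rw [if_pos (show n < n + 1 by omega)]
    exact B.pm_tgt_top n (B.src (n + 1) f)
  · simp only [Function.update_of_ne (show n + 1 ≠ k by omega)]
    rw [if_neg (show ¬ n + 1 < k by omega)]
    by_cases hnk : n = k
    · subst hnk
      simp only [Function.update_self]
      rw [hf]
      exact x.property n
    · simp only [Function.update_of_ne hnk]
      rw [if_neg (show ¬ n < k by omega)]
      exact x.property n

open Classical in
noncomputable def VMap (B : POB V E) (x : B.X) : B.X :=
  if hx : ∀ i, EdgeMaximal V E B.tgt B.le i (x.val i) then B.xmin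
  else
    ⟨Function.update
        (fun i => if i < B.kOf x then
          B.pm (B.kOf x) (B.src (B.kOf x) (B.succEdge (B.kOf x) (x.val (B.kOf x)))) i
        else x.val i)
        (B.kOf x) (B.succEdge (B.kOf x) (x.val (B.kOf x))),
      B.spliceMem (B.kOf x) _ x
        (B.succEdge_spec (B.kOf_spec x (not_forall.mp hx))).1⟩

lemma VMap_allmax (B : POB V E) (x : B.X)
    (hx : ∀ i, EdgeMaximal V E B.tgt B.le i (x.val i)) : B.VMap x = B.xmin := by
  unfold VMap
  rw [dif_pos hx]

lemma VMap_val (B : POB V E) (x : B.X)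
    (hx : ¬ ∀ i, EdgeMaximal V E B.tgt B.le i (x.val i)) :
    (B.VMap x).val = Function.update
        (fun i => if i < B.kOf x then
          B.pm (B.kOf x) (B.src (B.kOf x) (B.succEdge (B.kOf x) (x.val (B.kOf x)))) i
        else x.val i)
        (B.kOf x) (B.succEdge (B.kOf x) (x.val (B.kOf x))) := by
  unfold VMap
  rw [dif_neg hx]

lemma VMap_val_k (B : POB V E) (x : B.X)
    (hx : ¬ ∀ i, EdgeMaximal V E B.tgt B.le i (x.val i)) :
    (B.VMap x).val (B.kOf x) = B.succEdge (B.kOf x) (x.val (B.kOf x)) := by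
  rw [B.VMap_val x hx]
  exact Function.update_self _ _ _

lemma VMap_val_lt (B : POB V E) (x : B.X)
    (hx : ¬ ∀ i, EdgeMaximal V E B.tgt B.le i (x.val i)) {i : ℕ} (hi : i < B.kOf x) :
    (B.VMap x).val i
      = B.pm (B.kOf x) (B.src (B.kOf x) (B.succEdge (B.kOf x) (x.val (B.kOf x)))) i := by
  rw [B.VMap_val x hx, Function.update_of_ne (show i ≠ B.kOf x by omega)]
  exact if_pos hi

lemma VMap_val_gt (B : POB V E) (x : B.X)
    (hx : ¬ ∀ i, EdgeMaximal V E B.tgt B.le i (x.val i)) {i : ℕ} (hi : B.kOf x < i) :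
    (B.VMap x).val i = x.val i := by
  rw [B.VMap_val x hx, Function.update_of_ne (show i ≠ B.kOf x by omega)]
  exact if_neg (by omega)

lemma VMap_spec (B : POB V E) (x : B.X) (hx : x ≠ B.xmax) :
    ∃ k : ℕ,
      (∀ i, i < k → EdgeMaximal V E B.tgt B.le i (x.val i)) ∧
      ¬ EdgeMaximal V E B.tgt B.le k (x.val k) ∧
      EdgeSucc V E B.tgt B.le k (x.val k) ((B.VMap x).val k) ∧
      (∀ i, k < i → (B.VMap x).val i = x.val i) ∧
      (∀ i, i < k → EdgeMinimal V E B.tgt B.le i ((B.VMap x).val i)) := by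
  have hall : ¬ ∀ i, EdgeMaximal V E B.tgt B.le i (x.val i) :=
    fun h => hx (B.hxmax_unique x h)
  have hex := not_forall.mp hall
  refine ⟨B.kOf x, B.kOf_min x, B.kOf_spec x hex, ?_, ?_, ?_⟩
  · rw [B.VMap_val_k x hall]
    exact B.succEdge_spec (B.kOf_spec x hex)
  · intro i hi
    exact B.VMap_val_gt x hall hi
  · intro i hi
    rw [B.VMap_val_lt x hall hi]
    exact B.pm_min _ _ i hi

lemma vmap_leftinv (B : POB V E) (x : B.X) : B.op.VMap (B.VMap x) = x := by
  by_cases hx : ∀ i, EdgeMaximal V E B.tgt B.le i (x.val i)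
  · have h1 : x = B.xmax := B.hxmax_unique x hx
    rw [h1, B.VMap_allmax B.xmax B.hxmax]
    exact B.op.VMap_allmax B.op.xmax B.op.hxmax
  · have hex := not_forall.mp hx
    obtain ⟨k, hk⟩ : ∃ k, B.kOf x = k := ⟨_, rfl⟩
    have hkmax : ¬ EdgeMaximal V E B.tgt B.le k (x.val k) := hk ▸ B.kOf_spec x hex
    have hsucc : EdgeSucc V E B.tgt B.le k (x.val k) ((B.VMap x).val k) := by
      have h2 := B.VMap_val_k x hx
      rw [hk] at h2
      rw [h2]
      exact B.succEdge_spec hkmax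
    have hymin : ¬ EdgeMinimal V E B.tgt B.le k ((B.VMap x).val k) := by
      intro hmin
      have h1 : B.le k ((B.VMap x).val k) (x.val k) := hmin (x.val k) hsucc.1.symm
      exact hsucc.2.2.1 (B.hantisymm k _ _ hsucc.2.1 h1)
    have hyall : ¬ ∀ i, EdgeMaximal V E B.op.tgt B.op.le i ((B.VMap x).val i) :=
      fun h => hymin (h k)
    have hky : B.op.kOf (B.VMap x) = k := by
      apply B.op.kOf_eq
      · exact hymin
      · intro i hi
        have h2 := B.VMap_val_lt x hx (hk ▸ hi)
        rw [hk] at h2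
        show EdgeMinimal V E B.tgt B.le i ((B.VMap x).val i)
        rw [h2]
        exact B.pm_min _ _ i hi
    have hz : EdgeSucc V E B.op.tgt B.op.le k ((B.VMap x).val k)
        (B.op.succEdge k ((B.VMap x).val k)) := B.op.succEdge_spec hymin
    have he' : B.op.succEdge k ((B.VMap x).val k) = x.val k :=
      B.edgeSucc_unique_left (B.edgeSucc_op hz) hsucc
    apply Subtype.ext
    funext i
    rcases lt_trichotomy i k with hik | hik | hik
    · have h2 := B.op.VMap_val_lt (B.VMap x) hyall (show i < B.op.kOf (B.VMap x) by omega)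
      rw [hky, he'] at h2
      rw [h2]
      obtain ⟨m, rfl⟩ : ∃ m, k = m + 1 := ⟨k - 1, by omega⟩
      exact (B.op.pm_unique m (B.op.src (m + 1) (x.val (m + 1))) x.val
        (fun j hj => B.kOf_min x j (by omega))
        (fun j hj => x.property j)
        (x.property m) i (by omega)).symm
    · subst hik
      have h2 := B.op.VMap_val_k (B.VMap x) hyall
      rw [hky] at h2
      rw [h2, he']
    · have h2 := B.op.VMap_val_gt (B.VMap x) hyall (show B.op.kOf (B.VMap x) < i by omega)
      rw [h2]
      exact B.VMap_val_gt x hx (hk ▸ hik)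

variable [∀ n, TopologicalSpace (E n)] [∀ n, DiscreteTopology (E n)]

lemma compactSpace (B : POB V E) : CompactSpace B.X := by
  have h1 : {x : ∀ n, E n | ∀ n, B.tgt n (x n) = B.src (n + 1) (x (n + 1))} =
      ⋂ n, (fun x : ∀ m, E m => (x n, x (n + 1))) ⁻¹'
        {p : E n × E (n + 1) | B.tgt n p.1 = B.src (n + 1) p.2} := by
    ext x
    simp [Set.mem_iInter]
  have h2 : IsClosed {x : ∀ n, E n | ∀ n, B.tgt n (x n) = B.src (n + 1) (x (n + 1))} := by
    rw [h1]
    exact isClosed_iInter fun n => (isClosed_discrete _).preimage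
      ((continuous_apply n).prodMk (continuous_apply (n + 1)))
  exact isCompact_iff_compactSpace.mp h2.isCompact

lemma keyMin (B : POB V E) (n : ℕ) :
    ∃ M, n < M ∧ ∀ (v : V M) (i : ℕ), i < n → B.pm M v i = B.xmin.val i := by
  by_contra hcon
  push_neg at hcon
  have hKne : ∀ M : ℕ, ∃ x : B.X,
      (∀ i, i < M → EdgeMinimal V E B.tgt B.le i (x.val i)) ∧
      ∃ i, i < n ∧ x.val i ≠ B.xmin.val i := by
    intro M
    obtain ⟨v, i0, hi0, hne⟩ := hcon (max M n + 1) (by omega)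
    obtain ⟨x, hx⟩ := B.pm_extend (max M n) v
    refine ⟨x, ?_, i0, hi0, ?_⟩
    · intro i hi
      rw [hx i (by omega)]
      exact B.pm_min _ v i (by omega)
    · rw [hx i0 (by omega)]
      exact hne
  haveI : CompactSpace B.X := B.compactSpace
  set K : ℕ → Set B.X := fun M =>
    {x | (∀ i, i < M → EdgeMinimal V E B.tgt B.le i (x.val i)) ∧
      ∃ i, i < n ∧ x.val i ≠ B.xmin.val i} with hK
  have hsub : ∀ M, K (M + 1) ⊆ K M := fun M x hx => ⟨fun i hi => hx.1 i (by omega), hx.2⟩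
  have hne : ∀ M, (K M).Nonempty := by
    intro M
    obtain ⟨x, h1, h2⟩ := hKne M
    exact ⟨x, h1, h2⟩
  have hclosed : ∀ M, IsClosed (K M) := by
    intro M
    have h1 : IsClosed {x : B.X | ∀ i, i < M → EdgeMinimal V E B.tgt B.le i (x.val i)} := by
      have he : {x : B.X | ∀ i, i < M → EdgeMinimal V E B.tgt B.le i (x.val i)} =
          ⋂ i, ⋂ (_ : i < M), {x : B.X | EdgeMinimal V E B.tgt B.le i (x.val i)} := by
        ext x
        simp
      rw [he]
      refine isClosed_iInter fun i => isClosed_iInter fun _ => ?_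
      exact (isClosed_discrete {e : E i | EdgeMinimal V E B.tgt B.le i e}).preimage
        ((continuous_apply i).comp continuous_subtype_val)
    have h2 : IsClosed {x : B.X | ∃ i, i < n ∧ x.val i ≠ B.xmin.val i} := by
      have he : {x : B.X | ∃ i, i < n ∧ x.val i ≠ B.xmin.val i} =
          ⋃ i ∈ Set.Iio n, {x : B.X | x.val i ≠ B.xmin.val i} := by
        ext x
        simp
      rw [he]
      refine Set.Finite.isClosed_biUnion (Set.finite_Iio n) fun i _ => ?_
      exact (isClosed_discrete {e : E i | e ≠ B.xmin.val i}).preimage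
        ((continuous_apply i).comp continuous_subtype_val)
    exact h1.inter h2
  obtain ⟨x, hx⟩ := IsCompact.nonempty_iInter_of_sequence_nonempty_isCompact_isClosed K hsub hne
    ((hclosed 0).isCompact) hclosed
  have hxmem : ∀ M, x ∈ K M := fun M => Set.mem_iInter.mp hx M
  have hmin : ∀ i, EdgeMinimal V E B.tgt B.le i (x.val i) :=
    fun i => (hxmem (i + 1)).1 i (by omega)
  obtain ⟨i, hi, hne'⟩ := (hxmem 0).2
  exact hne' (by rw [B.hxmin_unique x hmin])

lemma vmap_continuous (B : POB V E) : Continuous B.VMap := by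
  have LC : ∀ (x : B.X) (n : ℕ), ∃ m : ℕ, ∀ y : B.X,
      (∀ i, i ≤ m → y.val i = x.val i) → (B.VMap y).val n = (B.VMap x).val n := by
    intro x n
    by_cases hx : ∀ i, EdgeMaximal V E B.tgt B.le i (x.val i)
    · obtain ⟨M, hM, hMv⟩ := B.keyMin (n + 1)
      refine ⟨M, fun y hy => ?_⟩
      by_cases hy' : ∀ i, EdgeMaximal V E B.tgt B.le i (y.val i)
      · rw [B.VMap_allmax x hx, B.VMap_allmax y hy']
      · have hex := not_forall.mp hy'
        have hMk : M < B.kOf y := by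
          by_contra hle
          exact (B.kOf_spec y hex) (by rw [hy (B.kOf y) (by omega)]; exact hx (B.kOf y))
        rw [B.VMap_allmax x hx]
        rw [B.VMap_val_lt y hy' (by omega)]
        obtain ⟨w, hw⟩ := B.pm_cascade (B.kOf y) _ M (by omega)
        rw [hw n (by omega)]
        exact hMv w n (by omega)
    · have hex := not_forall.mp hx
      refine ⟨B.kOf x + n, fun y hy => ?_⟩
      have hyx : ∀ i, i ≤ B.kOf x → y.val i = x.val i := fun i hi => hy i (by omega)
      have hy' : ¬ ∀ i, EdgeMaximal V E B.tgt B.le i (y.val i) := by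
        intro h
        exact B.kOf_spec x hex (by rw [← hyx (B.kOf x) le_rfl]; exact h (B.kOf x))
      have hky : B.kOf y = B.kOf x := by
        apply B.kOf_eq
        · rw [hyx (B.kOf x) le_rfl]
          exact B.kOf_spec x hex
        · intro i hi
          rw [hyx i (by omega)]
          exact B.kOf_min x i hi
      rcases lt_trichotomy n (B.kOf x) with h | h | h
      · rw [B.VMap_val_lt y hy' (by omega), B.VMap_val_lt x hx h, hky,
          hyx (B.kOf x) le_rfl]
      · have h1 := B.VMap_val_k y hy'
        rw [hky, hyx (B.kOf x) le_rfl] at h1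
        rw [h, h1, B.VMap_val_k x hx]
      · rw [B.VMap_val_gt y hy' (by omega), B.VMap_val_gt x hx h]
        exact hy n (by omega)
  have hcont : Continuous fun x : B.X => (B.VMap x).val := by
    apply continuous_pi
    intro n
    rw [continuous_iff_continuousAt]
    intro x
    apply Filter.EventuallyEq.continuousAt (y := (B.VMap x).val n)
    obtain ⟨m, hm⟩ := LC x n
    have hev : ∀ᶠ y : B.X in nhds x, ∀ i : Fin (m + 1), y.val i = x.val i := by
      rw [Filter.eventually_all]
      intro i
      have ho : IsOpen {y : B.X | y.val (i : ℕ) = x.val (i : ℕ)} :=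
        (isOpen_discrete {e : E (i : ℕ) | e = x.val (i : ℕ)}).preimage
          ((continuous_apply (i : ℕ)).comp continuous_subtype_val)
      exact ho.mem_nhds rfl
    exact hev.mono fun y hy => hm y fun i hi => hy ⟨i, by omega⟩
  exact continuous_induced_rng.mpr hcont

lemma main (B : POB V E) :
    ∃ Φ : B.X ≃ₜ B.X,
      Φ B.xmax = B.xmin ∧
      (∀ x, x ≠ B.xmax → ∃ k : ℕ,
        (∀ i, i < k → EdgeMaximal V E B.tgt B.le i (x.val i)) ∧
        ¬ EdgeMaximal V E B.tgt B.le k (x.val k) ∧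
        EdgeSucc V E B.tgt B.le k (x.val k) ((Φ x).val k) ∧
        (∀ i, k < i → (Φ x).val i = x.val i) ∧
        (∀ i, i < k → EdgeMinimal V E B.tgt B.le i ((Φ x).val i))) := by
  haveI : CompactSpace B.X := B.compactSpace
  let eqv : B.X ≃ B.X :=
    ⟨B.VMap, B.op.VMap, B.vmap_leftinv, fun y => B.op.vmap_leftinv y⟩
  have hcont : Continuous eqv := B.vmap_continuous
  refine ⟨hcont.homeoOfEquivCompactToT2, ?_, ?_⟩
  · show B.VMap B.xmax = B.xmin
    exact B.VMap_allmax B.xmax B.hxmax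
  · intro x hx
    exact B.VMap_spec x hx

end POB

end VershikAux

/-- For a properly ordered Bratteli diagram `B`, the Vershik map `V_B`
(sending the unique maximal path to the unique minimal path, and any other path to its
lexicographic successor) is continuous on `X_B`, hence a homeomorphism of the compact
space `X_B`. -/
theorem vershik_map_homeomorph
    (V : ℕ → Type) (E : ℕ → Type)
    [∀ n, Fintype (V n)] [∀ n, Fintype (E n)]
    [∀ n, TopologicalSpace (E n)] [∀ n, DiscreteTopology (E n)]
    (src : ∀ n, E n → V n) (tgt : ∀ n, E n → V (n + 1))
    (hrange : ∀ n (v : V (n + 1)), ∃ e : E n, tgt n e = v)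
    (hsource : ∀ n (v : V n), ∃ e : E n, src n e = v)
    -- the partial order on edges: a linear order on each fiber, and comparable edges
    -- have equal range
    (le : ∀ n, E n → E n → Prop)
    (hcomp : ∀ n (e f : E n), le n e f → tgt n e = tgt n f)
    (hrefl : ∀ n (e : E n), le n e e)
    (hantisymm : ∀ n (e f : E n), le n e f → le n f e → e = f)
    (htrans : ∀ n (e f g : E n), le n e f → le n f g → le n e g)
    (htotal : ∀ n (e f : E n), tgt n e = tgt n f → le n e f ∨ le n f e)
    -- simplicity of the diagram
    (hsimple : ∃ m : ℕ → ℕ, m 0 = 0 ∧ StrictMono m ∧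
      ∀ n (v : V (m n)) (w : V (m n + (m (n + 1) - m n))),
        ReachesIn V E src tgt (m (n + 1) - m n) (m n) v w)
    -- the unique maximal and minimal paths
    (xmax xmin : {x : ∀ n, E n // ∀ n, tgt n (x n) = src (n + 1) (x (n + 1))})
    (hxmax : ∀ n, EdgeMaximal V E tgt le n (xmax.val n))
    (hxmax_unique : ∀ x : {x : ∀ n, E n // ∀ n, tgt n (x n) = src (n + 1) (x (n + 1))},
      (∀ n, EdgeMaximal V E tgt le n (x.val n)) → x = xmax)
    (hxmin : ∀ n, EdgeMinimal V E tgt le n (xmin.val n))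
    (hxmin_unique : ∀ x : {x : ∀ n, E n // ∀ n, tgt n (x n) = src (n + 1) (x (n + 1))},
      (∀ n, EdgeMinimal V E tgt le n (x.val n)) → x = xmin) :
    -- the Vershik map is continuous, hence (being a bijection of a compact Hausdorff
    -- space) a homeomorphism of X_B
    ∃ Φ : {x : ∀ n, E n // ∀ n, tgt n (x n) = src (n + 1) (x (n + 1))} ≃ₜ
        {x : ∀ n, E n // ∀ n, tgt n (x n) = src (n + 1) (x (n + 1))},
      Φ xmax = xmin ∧
      (∀ x, x ≠ xmax → ∃ k : ℕ,
        (∀ i, i < k → EdgeMaximal V E tgt le i (x.val i)) ∧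
        ¬ EdgeMaximal V E tgt le k (x.val k) ∧
        EdgeSucc V E tgt le k (x.val k) ((Φ x).val k) ∧
        (∀ i, k < i → (Φ x).val i = x.val i) ∧
        (∀ i, i < k → EdgeMinimal V E tgt le i ((Φ x).val i))) := by
  exact POB.main ⟨src, tgt, le, hrange, hsource, hrefl, hantisymm, htrans, htotal,
    xmax, xmin, hxmax, hxmax_unique, hxmin, hxmin_unique⟩
end

section
/- For a properly ordered Bratteli diagram B, the orbit of any point under the Vershik map V_B is dense in X_B; i.e., (X_B, V_B) is a minimal dynamical system. -/
section PathSpace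

variable {V E : ℕ → Type} {src : ∀ n, E n → V n} {tgt : ∀ n, E n → V (n + 1)}

variable (src tgt) in
abbrev PathSpace : Type := {x : ∀ n, E n // ∀ n, tgt n (x n) = src (n + 1) (x (n + 1))}

variable (src tgt) in
def IsPathFrom (k : ℕ) (x : ∀ n, E n) : Prop :=
  ∀ i, k ≤ i → tgt i (x i) = src (i + 1) (x (i + 1))

theorem ReachesIn.exists_isPathFrom {st k : ℕ} {v : V k} {w : V (k + st)}
    (h : ReachesIn V E src tgt st k v w) {x : ∀ n, E n} (hx : IsPathFrom src tgt (k + st) x)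
    (hxw : src (k + st) (x (k + st)) = w) :
    ∃ z, IsPathFrom src tgt k z ∧ (∀ i, k + st ≤ i → z i = x i) ∧ src k (z k) = v := by
  induction st generalizing x with
  | zero => exact ⟨x, hx, fun _ _ => rfl, hxw.trans h.symm⟩
  | succ st IH =>
    obtain ⟨e, hew, h⟩ := h
    set x' := Function.update x (k + st) e with hx'_def
    have hx' : IsPathFrom src tgt (k + st) x' := by
      intro i hi
      rcases hi.eq_or_lt with rfl | hi
      · simp only [x', Function.update_self, Function.update_of_ne (Nat.succ_ne_self _)]
        exact hew.trans hxw.symm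
      · simpa [x', hi.ne', (Nat.lt_succ_of_lt hi).ne'] using hx i hi
    obtain ⟨z, hz, hzx', hzv⟩ := IH h hx' (by simp [x'])
    refine ⟨z, hz, fun i hi => ?_, hzv⟩
    rw [hzx' i (by omega), hx'_def, Function.update_of_ne (by omega)]

theorem PathSpace.exists_splice {k : ℕ} (y : PathSpace src tgt) {z : ∀ n, E n}
    (hz : IsPathFrom src tgt k z) (hzy : src k (z k) = src k (y.val k)) :
    ∃ w : PathSpace src tgt, (∀ i < k, w.val i = y.val i) ∧ ∀ i, k ≤ i → w.val i = z i := by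
  refine ⟨⟨fun i => if i < k then y.val i else z i, fun i => ?_⟩,
    fun i hi => if_pos hi, fun i hi => if_neg (by omega)⟩
  rcases lt_trichotomy (i + 1) k with hi | hi | hi
  · simpa [hi, (Nat.lt_succ_self i).trans hi] using y.property i
  · subst hi
    simpa [y.property i] using hzy.symm
  · simpa [show ¬ i < k by omega, show ¬ i + 1 < k by omega] using hz i (by omega)

theorem PathSpace.exists_eq_below_eq_above
    (hreach : ∀ N, ∃ L ≥ N, ∃ st, ∀ v w, ReachesIn V E src tgt st L v w)
    (x y : PathSpace src tgt) (N : ℕ) :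
    ∃ z : PathSpace src tgt, (∀ i < N, z.val i = y.val i) ∧
      ∃ M, ∀ i, M ≤ i → z.val i = x.val i := by
  obtain ⟨L, hNL, st, hL⟩ := hreach N
  obtain ⟨z₀, hz₀, hz₀x, hz₀y⟩ :=
    (hL (src L (y.val L)) _).exists_isPathFrom (fun i _ => x.property i) rfl
  obtain ⟨z, hzy, hzz₀⟩ := PathSpace.exists_splice y hz₀ hz₀y
  exact ⟨z, fun i hi => hzy i (by omega),
    L + st, fun i hi => (hzz₀ i (by omega)).trans (hz₀x i hi)⟩

end PathSpace

theorem Set.Finite.exists_iterate_of_strictly_increasing {α : Type*} {r : α → α → Prop}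
    (htrans : ∀ a b c, r a b → r b c → r a c) (hirrefl : ∀ a, ¬ r a a)
    {S : Set α} (hS : S.Finite) {P : α → Prop} {f : α → α}
    (hf : ∀ w ∈ S, ¬ P w → f w ∈ S ∧ r w (f w)) {w : α} (hw : w ∈ S) :
    ∃ a, f^[a] w ∈ S ∧ P (f^[a] w) := by
  induction hc : {u ∈ S | r w u}.ncard using Nat.strong_induction_on generalizing w with
  | _ c IH =>
    by_cases hP : P w
    · exact ⟨0, hw, hP⟩
    obtain ⟨hfw, hr⟩ := hf w hw hP
    have hlt : {u ∈ S | r (f w) u}.ncard < c := hc ▸ Set.ncard_lt_ncard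
      ⟨fun u hu => ⟨hu.1, htrans _ _ _ hr hu.2⟩, fun hsub => hirrefl _ (hsub ⟨hfw, hr⟩).2⟩
      (hS.subset fun _ hu => hu.1)
    obtain ⟨a, ha⟩ := IH _ hlt hfw rfl
    exact ⟨a + 1, ha⟩

section LexLt

variable {E : ℕ → Type} {le : ∀ n, E n → E n → Prop}

variable (E le) in
def LexLt (a b : ∀ n, E n) : Prop :=
  ∃ k, a k ≠ b k ∧ le k (a k) (b k) ∧ ∀ i, k < i → a i = b i

theorem lexLt_irrefl (a : ∀ n, E n) : ¬ LexLt E le a a := fun ⟨_, hne, _⟩ => hne rfl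

theorem lexLt_trans (hantisymm : ∀ n (e f : E n), le n e f → le n f e → e = f)
    (htrans : ∀ n (e f g : E n), le n e f → le n f g → le n e g)
    (a b c : ∀ n, E n) (hab : LexLt E le a b) (hbc : LexLt E le b c) : LexLt E le a c := by
  obtain ⟨k, hne, hle, hab⟩ := hab
  obtain ⟨l, hne', hle', hbc⟩ := hbc
  rcases lt_trichotomy k l with h | rfl | h
  · exact ⟨l, hab l h ▸ hne', hab l h ▸ hle', fun i hi => (hab i (h.trans hi)).trans (hbc i hi)⟩
  · refine ⟨k, fun hac => hne (hantisymm _ _ _ hle (hac ▸ hle')), htrans _ _ _ _ hle hle',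
      fun i hi => (hab i hi).trans (hbc i hi)⟩
  · exact ⟨k, (hbc k h).symm ▸ hne, (hbc k h).symm ▸ hle,
      fun i hi => (hab i hi).trans (hbc i (h.trans hi))⟩

end LexLt

section Orbit

variable {V E : ℕ → Type} {src : ∀ n, E n → V n} {tgt : ∀ n, E n → V (n + 1)}
  {le : ∀ n, E n → E n → Prop}

theorem PathSpace.eq_of_edgeMaximal_of_eq_above
    (hantisymm : ∀ n (e f : E n), le n e f → le n f e → e = f)
    {M : ℕ} {z w : PathSpace src tgt} (hzw : ∀ i, M ≤ i → z.val i = w.val i)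
    (hz : ∀ i < M, EdgeMaximal V E tgt le i (z.val i))
    (hw : ∀ i < M, EdgeMaximal V E tgt le i (w.val i)) : z = w := by
  refine Subtype.ext (funext fun i => ?_)
  rcases le_or_gt M i with hi | hi
  · exact hzw i hi
  refine Nat.decreasingInduction (motive := fun i _ => z.val i = w.val i)
    (fun k hk hsucc => ?_) (hzw M le_rfl) hi.le
  have htgt : tgt k (z.val k) = tgt k (w.val k) := by rw [z.property, w.property, hsucc]
  exact hantisymm k _ _ (hw k hk _ htgt) (hz k hk _ htgt.symm)

theorem PathSpace.finite_setOf_eq_above [∀ n, Finite (E n)] (x : PathSpace src tgt) (M : ℕ) :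
    {w : PathSpace src tgt | ∀ i, M ≤ i → w.val i = x.val i}.Finite := by
  refine Set.Finite.of_finite_image (f := fun w (i : Fin M) => w.val i) (Set.toFinite _) ?_
  intro a ha b hb hab
  refine Subtype.ext (funext fun i => ?_)
  rcases le_or_gt M i with hi | hi
  · rw [ha i hi, hb i hi]
  · exact congrFun hab ⟨i, hi⟩

theorem exists_zpow_apply_eq_of_eq_above [∀ n, Finite (E n)]
    (hantisymm : ∀ n (e f : E n), le n e f → le n f e → e = f)
    (htrans : ∀ n (e f g : E n), le n e f → le n f g → le n e g)
    (xmax : PathSpace src tgt) (hxmax : ∀ n, EdgeMaximal V E tgt le n (xmax.val n))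
    (Φ : Equiv.Perm (PathSpace src tgt))
    (hΦ : ∀ x, x ≠ xmax → ∃ k, (∀ i < k, EdgeMaximal V E tgt le i (x.val i)) ∧
      x.val k ≠ (Φ x).val k ∧ le k (x.val k) ((Φ x).val k) ∧
      ∀ i, k < i → (Φ x).val i = x.val i)
    {x z : PathSpace src tgt} {M : ℕ} (hzx : ∀ i, M ≤ i → z.val i = x.val i) :
    ∃ n : ℤ, (Φ ^ n) x = z := by
  set S := {w : PathSpace src tgt | ∀ i, M ≤ i → w.val i = x.val i}
  have hstep : ∀ w ∈ S, ¬ (∀ i < M, EdgeMaximal V E tgt le i (w.val i)) →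
      Φ w ∈ S ∧ LexLt E le w.val (Φ w).val := by
    intro w hw hnmax
    obtain ⟨j, hjM, hj⟩ := not_forall₂.mp hnmax
    obtain ⟨k, hbelow, hne, hle, habove⟩ :=
      hΦ w (by rintro rfl; exact hj (hxmax j))
    have hkM : k < M := lt_of_not_ge fun h => hj (hbelow j (hjM.trans_le h))
    exact ⟨fun i hi => (habove i (hkM.trans_le hi)).trans (hw i hi),
      k, hne, hle, fun i hi => (habove i hi).symm⟩
  have hclimb := fun w (hw : w ∈ S) =>
    (x.finite_setOf_eq_above M).exists_iterate_of_strictly_increasing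
      (fun a b c => lexLt_trans hantisymm htrans a.val b.val c.val)
      (fun a => lexLt_irrefl a.val) hstep hw
  obtain ⟨a, haS, ha⟩ := hclimb z hzx
  obtain ⟨b, hbS, hb⟩ := hclimb x fun _ _ => rfl
  have htop : (Φ ^ a) z = (Φ ^ b) x := by
    rw [← Equiv.Perm.iterate_eq_pow, ← Equiv.Perm.iterate_eq_pow]
    exact PathSpace.eq_of_edgeMaximal_of_eq_above hantisymm
      (fun i hi => (haS i hi).trans (hbS i hi).symm) ha hb
  refine ⟨-a + b, ?_⟩
  rw [zpow_add, Equiv.Perm.mul_apply, zpow_natCast, ← htop, zpow_neg, zpow_natCast,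
    Equiv.Perm.inv_eq_iff_eq]

end Orbit

theorem dense_of_forall_exists_eq_below {E : ℕ → Type*} [∀ n, TopologicalSpace (E n)]
    [∀ n, DiscreteTopology (E n)] {P : (∀ n, E n) → Prop} {D : Set (Subtype P)}
    (h : ∀ (p : Subtype P) (N : ℕ), ∃ z ∈ D, ∀ i < N, z.val i = p.val i) : Dense D := by
  refine dense_iff_inter_open.mpr fun U hU ⟨p, hp⟩ => ?_
  obtain ⟨W, hW, rfl⟩ := isOpen_induced_iff.mp hU
  obtain ⟨I, u, hu, hIW⟩ := isOpen_pi_iff.mp hW p.val hp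
  obtain ⟨z, hzD, hz⟩ := h p (I.sup id + 1)
  refine ⟨z, hIW fun i hi => ?_, hzD⟩
  rw [hz i (Nat.lt_succ_of_le (Finset.le_sup (f := id) hi))]
  exact (hu i hi).2

theorem vershik_orbits_dense_general
    (V : ℕ → Type) (E : ℕ → Type)
    [∀ n, Fintype (E n)]
    [∀ n, TopologicalSpace (E n)] [∀ n, DiscreteTopology (E n)]
    (src : ∀ n, E n → V n) (tgt : ∀ n, E n → V (n + 1))
    -- the partial order on edges: a linear order on each fiber, and comparable edges
    -- have equal range
    (le : ∀ n, E n → E n → Prop)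
    (hantisymm : ∀ n (e f : E n), le n e f → le n f e → e = f)
    (htrans : ∀ n (e f g : E n), le n e f → le n f g → le n e g)
    -- simplicity of the diagram
    (hsimple : ∃ m : ℕ → ℕ, m 0 = 0 ∧ StrictMono m ∧
      ∀ n (v : V (m n)) (w : V (m n + (m (n + 1) - m n))),
        ReachesIn V E src tgt (m (n + 1) - m n) (m n) v w)
    -- the unique maximal and minimal paths
    (xmax xmin : {x : ∀ n, E n // ∀ n, tgt n (x n) = src (n + 1) (x (n + 1))})
    (hxmax : ∀ n, EdgeMaximal V E tgt le n (xmax.val n)) :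
    ∀ Φ : Equiv.Perm {x : ∀ n, E n // ∀ n, tgt n (x n) = src (n + 1) (x (n + 1))},
      Φ xmax = xmin →
      (∀ x, x ≠ xmax → ∃ k : ℕ,
        (∀ i, i < k → EdgeMaximal V E tgt le i (x.val i)) ∧
        ¬ EdgeMaximal V E tgt le k (x.val k) ∧
        EdgeSucc V E tgt le k (x.val k) ((Φ x).val k) ∧
        (∀ i, k < i → (Φ x).val i = x.val i) ∧
        (∀ i, i < k → EdgeMinimal V E tgt le i ((Φ x).val i))) →
      ∀ x, Dense {y : {x : ∀ n, E n // ∀ n, tgt n (x n) = src (n + 1) (x (n + 1))} |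
        ∃ n : ℤ, (Φ ^ n) x = y} := by
  intro Φ _ hΦ x
  obtain ⟨m, -, hmono, hm⟩ := hsimple
  have hreach : ∀ N, ∃ L ≥ N, ∃ st, ∀ v w, ReachesIn V E src tgt st L v w :=
    fun N => ⟨m N, hmono.le_apply, _, hm N⟩
  refine dense_of_forall_exists_eq_below fun p N => ?_
  obtain ⟨z, hzp, M, hzx⟩ := PathSpace.exists_eq_below_eq_above hreach x p N
  refine ⟨z, exists_zpow_apply_eq_of_eq_above hantisymm htrans xmax hxmax Φ
    (fun y hy => ?_) hzx, hzp⟩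
  obtain ⟨k, hbelow, -, ⟨-, hle, hne, -⟩, habove, -⟩ := hΦ y hy
  exact ⟨k, hbelow, hne, hle, habove⟩

/-- For a properly ordered Bratteli diagram `B`, the orbit of any point
under the Vershik map `V_B` (here: any bijection `Φ` of `X_B` with the defining properties
of the Vershik map) is dense in `X_B`; i.e. `(X_B, V_B)` is a minimal dynamical system. -/
theorem vershik_orbits_dense
    (V : ℕ → Type) (E : ℕ → Type)
    [∀ n, Fintype (V n)] [∀ n, Fintype (E n)]
    [∀ n, TopologicalSpace (E n)] [∀ n, DiscreteTopology (E n)]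
    (src : ∀ n, E n → V n) (tgt : ∀ n, E n → V (n + 1))
    (hrange : ∀ n (v : V (n + 1)), ∃ e : E n, tgt n e = v)
    (hsource : ∀ n (v : V n), ∃ e : E n, src n e = v)
    -- the partial order on edges: a linear order on each fiber, and comparable edges
    -- have equal range
    (le : ∀ n, E n → E n → Prop)
    (hcomp : ∀ n (e f : E n), le n e f → tgt n e = tgt n f)
    (hrefl : ∀ n (e : E n), le n e e)
    (hantisymm : ∀ n (e f : E n), le n e f → le n f e → e = f)
    (htrans : ∀ n (e f g : E n), le n e f → le n f g → le n e g)
    (htotal : ∀ n (e f : E n), tgt n e = tgt n f → le n e f ∨ le n f e)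
    -- simplicity of the diagram
    (hsimple : ∃ m : ℕ → ℕ, m 0 = 0 ∧ StrictMono m ∧
      ∀ n (v : V (m n)) (w : V (m n + (m (n + 1) - m n))),
        ReachesIn V E src tgt (m (n + 1) - m n) (m n) v w)
    -- the unique maximal and minimal paths
    (xmax xmin : {x : ∀ n, E n // ∀ n, tgt n (x n) = src (n + 1) (x (n + 1))})
    (hxmax : ∀ n, EdgeMaximal V E tgt le n (xmax.val n))
    (hxmax_unique : ∀ x : {x : ∀ n, E n // ∀ n, tgt n (x n) = src (n + 1) (x (n + 1))},
      (∀ n, EdgeMaximal V E tgt le n (x.val n)) → x = xmax)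
    (hxmin : ∀ n, EdgeMinimal V E tgt le n (xmin.val n))
    (hxmin_unique : ∀ x : {x : ∀ n, E n // ∀ n, tgt n (x n) = src (n + 1) (x (n + 1))},
      (∀ n, EdgeMinimal V E tgt le n (x.val n)) → x = xmin) :
    ∀ Φ : Equiv.Perm {x : ∀ n, E n // ∀ n, tgt n (x n) = src (n + 1) (x (n + 1))},
      Φ xmax = xmin →
      (∀ x, x ≠ xmax → ∃ k : ℕ,
        (∀ i, i < k → EdgeMaximal V E tgt le i (x.val i)) ∧
        ¬ EdgeMaximal V E tgt le k (x.val k) ∧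
        EdgeSucc V E tgt le k (x.val k) ((Φ x).val k) ∧
        (∀ i, k < i → (Φ x).val i = x.val i) ∧
        (∀ i, i < k → EdgeMinimal V E tgt le i ((Φ x).val i))) →
      ∀ x, Dense {y : {x : ∀ n, E n // ∀ n, tgt n (x n) = src (n + 1) (x (n + 1))} |
        ∃ n : ℤ, (Φ ^ n) x = y} :=
  vershik_orbits_dense_general V E src tgt le hantisymm htrans hsimple xmax xmin hxmax
end

section
/- For a Cantor minimal system (X,T), the set K^0(X,T)^+ = {[f] : f ∈ C(X, Z), f ≥ 0} in the quotient group K^0(X,T) = C(X,Z)/∂_T C(X,Z) satisfies K^0(X,T)^+ ∩ (−K^0(X,T)^+) = {0}; that is, if [f] ∈ K^0(X,T)^+ and −[f] ∈ K^0(X,T)^+ then [f] = 0. -/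
private lemma equiv_pow_apply {X : Type} (e : Equiv.Perm X) (n : ℕ) (x : X) :
    (e ^ n) x = (⇑e)^[n] x := by
  induction n generalizing x with
  | zero => simp
  | succ n ih =>
    rw [pow_succ, Equiv.Perm.mul_apply, Function.iterate_succ_apply, ih]

private lemma coboundary_nonneg_eq_zero {X : Type} [TopologicalSpace X] [CompactSpace X]
    [Nonempty X] (T : X ≃ₜ X)
    (hmin : ∀ x : X, Dense {y : X | ∃ n : ℤ, (T.toEquiv ^ n) x = y})
    (h g : C(X, ℤ)) (hnn : ∀ x, 0 ≤ h x)
    (hcob : ∀ x, h x = g x - g (T x)) : ∀ x, h x = 0 := by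
  -- minimum of g
  have hrange : (Set.range g).Finite := (isCompact_range g.continuous).finite_of_discrete
  obtain ⟨m, hmmem, hmmin⟩ := Set.exists_min_image (Set.range g) id hrange
    (Set.range_nonempty g)
  obtain ⟨x₀, hx₀⟩ := hmmem
  set U : Set X := {x | g x = m} with hUdef
  have hUclosed : IsClosed U := by
    have : U = g ⁻¹' {m} := rfl
    rw [this]; exact (isClosed_discrete _).preimage g.continuous
  have hx₀U : x₀ ∈ U := hx₀
  have hUinv : ∀ x ∈ U, T x ∈ U := by
    intro x hx
    have h1 := hnn x
    have h2 := hcob x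
    have h3 : m ≤ g (T x) := hmmin _ ⟨T x, rfl⟩
    have : g x = m := hx
    simp only [hUdef, Set.mem_setOf_eq]
    omega
  have hUinvIt : ∀ (n : ℕ) (x), x ∈ U → (⇑T)^[n] x ∈ U := by
    intro n
    induction n with
    | zero => intro x hx; simpa using hx
    | succ n ih =>
      intro x hx
      rw [Function.iterate_succ']
      exact hUinv _ (ih x hx)
  -- nested compact sets
  set S : ℕ → Set X := fun n => ((⇑T.symm)^[n]) ⁻¹' U with hSdef
  have hSclosed : ∀ n, IsClosed (S n) := fun n =>
    hUclosed.preimage (T.symm.continuous.iterate n)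
  have hSne : ∀ n, (S n).Nonempty := by
    intro n
    refine ⟨(⇑T)^[n] x₀, ?_⟩
    simp only [hSdef, Set.mem_preimage]
    have : (⇑T.symm)^[n] ((⇑T)^[n] x₀) = x₀ := by
      have := Function.LeftInverse.iterate (g := ⇑T.symm) (f := ⇑T)
        (fun y => T.symm_apply_apply y) n
      exact this x₀
    rw [this]; exact hx₀U
  have hSanti : ∀ n, S (n + 1) ⊆ S n := by
    intro n x hx
    simp only [hSdef, Set.mem_preimage] at hx ⊢
    have key : (⇑T.symm)^[n] x = T ((⇑T.symm)^[n+1] x) := by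
      rw [Function.iterate_succ']
      simp
    rw [key]
    exact hUinv _ hx
  have hW : (⋂ n, S n).Nonempty := by
    apply IsCompact.nonempty_iInter_of_sequence_nonempty_isCompact_isClosed S hSanti hSne
      ((hSclosed 0).isCompact) hSclosed
  obtain ⟨w, hw⟩ := hW
  -- full orbit of w is in U
  have horb : ∀ k : ℤ, (T.toEquiv ^ k) w ∈ U := by
    intro k
    obtain ⟨n, rfl | rfl⟩ := Int.eq_nat_or_neg k
    · rw [zpow_natCast, equiv_pow_apply]
      have hw0 : w ∈ U := by
        have := Set.mem_iInter.mp hw 0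
        simpa [hSdef] using this
      exact hUinvIt n w hw0
    · rw [zpow_neg, zpow_natCast, ← inv_pow, equiv_pow_apply]
      have := Set.mem_iInter.mp hw n
      simpa [hSdef] using this
  -- density forces U = univ
  have hUuniv : U = Set.univ := by
    have hsub : {y : X | ∃ n : ℤ, (T.toEquiv ^ n) w = y} ⊆ U := by
      rintro y ⟨n, rfl⟩; exact horb n
    have := (hmin w).closure_eq
    have h2 : closure {y : X | ∃ n : ℤ, (T.toEquiv ^ n) w = y} ⊆ closure U :=
      closure_mono hsub
    rw [this, hUclosed.closure_eq] at h2
    exact Set.eq_univ_of_univ_subset h2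
  intro x
  have hgx : g x = m := by
    have : x ∈ U := hUuniv ▸ Set.mem_univ x
    exact this
  have hgTx : g (T x) = m := by
    have : T x ∈ U := hUuniv ▸ Set.mem_univ (T x)
    exact this
  rw [hcob x, hgx, hgTx, sub_self]

/-- For a Cantor minimal system `(X,T)`, the positive cone
`K⁰(X,T)⁺ = {[f] : f ∈ C(X,ℤ), f ≥ 0}` of `K⁰(X,T) = C(X,ℤ)/∂_T C(X,ℤ)` satisfies
`K⁰(X,T)⁺ ∩ (−K⁰(X,T)⁺) = {0}`: if `[f] ∈ K⁰(X,T)⁺` and `−[f] ∈ K⁰(X,T)⁺` then `[f] = 0`,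
i.e. `f` is itself a coboundary `g − g∘T`. -/
theorem cantor_minimal_positive_cone_pointed
    (X : Type) [TopologicalSpace X] [CompactSpace X] [T2Space X]
    [TotallyDisconnectedSpace X] [Nonempty X]
    (T : X ≃ₜ X)
    (hmin : ∀ x : X, Dense {y : X | ∃ n : ℤ, (T.toEquiv ^ n) x = y})
    (f : C(X, ℤ))
    (hpos : ∃ (f₁ g : C(X, ℤ)), (∀ x, 0 ≤ f₁ x) ∧
      f - f₁ = g - g.comp ⟨(T : X → X), T.continuous⟩)
    (hneg : ∃ (f₂ g : C(X, ℤ)), (∀ x, 0 ≤ f₂ x) ∧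
      f + f₂ = g - g.comp ⟨(T : X → X), T.continuous⟩) :
    ∃ g : C(X, ℤ), f = g - g.comp ⟨(T : X → X), T.continuous⟩ := by
  obtain ⟨f₁, g₁, hf₁, e₁⟩ := hpos
  obtain ⟨f₂, g₂, hf₂, e₂⟩ := hneg
  have e₁' : ∀ x, f x - f₁ x = g₁ x - g₁ (T x) := by
    intro x
    have := congrArg (fun F : C(X, ℤ) => F x) e₁
    simpa using this
  have e₂' : ∀ x, f x + f₂ x = g₂ x - g₂ (T x) := by
    intro x
    have := congrArg (fun F : C(X, ℤ) => F x) e₂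
    simpa using this
  have key := coboundary_nonneg_eq_zero T hmin (f₁ + f₂) (g₂ - g₁)
    (fun x => by simp; have := hf₁ x; have := hf₂ x; omega)
    (fun x => by simp; have := e₁' x; have := e₂' x; omega)
  have hf₁0 : ∀ x, f₁ x = 0 := by
    intro x
    have := key x
    simp at this
    have := hf₁ x; have := hf₂ x
    omega
  refine ⟨g₁, ?_⟩
  ext x
  have := e₁' x
  have := hf₁0 x
  simp
  omega
end
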